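/- Let 𝒫₁, 𝒫₂, 𝒫₀ be real n_p × n_q matrices, Q_p a symmetric real n_p × n_p matrix, Q_q a symmetric real n_q × n_q matrix, and let Ω = [a₁, b₁] × [a₂, b₂] with a₁ < b₁, a₂ < b₂. Let p : ℝ × Ω → ℝ^{n_p} and q : ℝ × Ω → ℝ^{n_q} be continuously differentiable, set e_p = Q_p·p and e_q = Q_q·q, and suppose that on ℝ × Ω: ∂p/∂t = 𝒫₁·∂e_q/∂ξ₁ + 𝒫₂·∂e_q/∂ξ₂ + 𝒫₀·e_q and ∂q/∂t = 𝒫₁ᵀ·∂e_p/∂ξ₁ + 𝒫₂ᵀ·∂e_p/∂ξ₂ − 𝒫₀ᵀ·e_p. Then the energy H(t) = (1/2)·∬_Ω [pᵀQ_p p + qᵀQ_q q] dA is differentiable in t and dH/dt (t) = ∫_{a₂}^{b₂} [e_pᵀ𝒫₁e_q](t, b₁, ξ₂) − [e_pᵀ𝒫₁e_q](t, a₁, ξ₂) dξ₂ + ∫_{a₁}^{b₁} [e_pᵀ𝒫₂e_q](t, ξ₁, b₂) − [e_pᵀ𝒫₂e_q](t, ξ₁, a₂) dξ₁. -/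

import Mathlib

/-!
Differentiating under the integral sign gives `dH/dt = ∫_Ω (e_p ⬝ᵥ ∂ₜp + e_q ⬝ᵥ ∂ₜq)`, using the
symmetry of `Q_p` and `Q_q`. Substituting the dynamics, the `𝒫₀` terms cancel because `𝒫₀` enters
skew-symmetrically, and by the product rule the remaining integrand is the divergence of the flux
`(e_p ⬝ᵥ 𝒫₁ e_q, e_p ⬝ᵥ 𝒫₂ e_q)`. The divergence theorem on the rectangle turns its integral into
the four edge integrals.
-/

open Matrix MeasureTheory Set Function

section ParametricIntegral

variable {α E : Type*} [TopologicalSpace α] [MeasurableSpace α] [OpensMeasurableSpace α]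
  [NormedAddCommGroup E] [NormedSpace ℝ E] {μ : Measure α} [IsFiniteMeasureOnCompacts μ]

theorem hasDerivAt_setIntegral_of_isCompact {K : Set α} (hK : IsCompact K) (hKm : MeasurableSet K)
    {F F' : ℝ → α → E} (hF : ∀ t, ContinuousOn (F t) K)
    (hF' : ContinuousOn (uncurry F') (univ ×ˢ K))
    (hderiv : ∀ t, ∀ x ∈ K, HasDerivAt (F · x) (F' t x) t) (t₀ : ℝ) :
    HasDerivAt (fun t => ∫ x in K, F t x ∂μ) (∫ x in K, F' t₀ x ∂μ) t₀ := by
  obtain ⟨C, hC⟩ := ((isCompact_closedBall t₀ 1).prod hK).exists_bound_of_continuousOn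
    (hF'.mono (prod_mono (subset_univ _) subset_rfl))
  have hF't₀ : ContinuousOn (F' t₀) K :=
    hF'.comp (Continuous.prodMk_right t₀).continuousOn fun x hx => ⟨mem_univ _, hx⟩
  refine (hasDerivAt_integral_of_dominated_loc_of_deriv_le (bound := fun _ => C)
    (Metric.closedBall_mem_nhds t₀ one_pos)
    (.of_forall fun t => (hF t).aestronglyMeasurable_of_isCompact hK hKm)
    ((hF t₀).integrableOn_compact' hK hKm) (hF't₀.aestronglyMeasurable_of_isCompact hK hKm)
    ?_ (integrableOn_const hK.measure_ne_top) ?_).2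
  · filter_upwards [ae_restrict_mem hKm] with x hx t ht using hC (t, x) ⟨ht, hx⟩
  · filter_upwards [ae_restrict_mem hKm] with x hx t _ using hderiv t x hx

end ParametricIntegral

section DotProduct

variable {𝕜 E : Type*} [NontriviallyNormedField 𝕜] [NormedAddCommGroup E] [NormedSpace 𝕜 E]
  {m n : Type*} [Fintype m] [Fintype n]

theorem HasDerivAt.dotProduct {f g : 𝕜 → n → 𝕜} {f' g' : n → 𝕜} {x : 𝕜}
    (hf : HasDerivAt f f' x) (hg : HasDerivAt g g' x) :
    HasDerivAt (fun s => f s ⬝ᵥ g s) (f' ⬝ᵥ g x + f x ⬝ᵥ g') x := by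
  show HasDerivAt (fun s => ∑ i, f s i * g s i) (∑ i, f' i * g x i + ∑ i, f x i * g' i) x
  rw [← Finset.sum_add_distrib]
  exact .fun_sum fun i _ => (hasDerivAt_pi.1 hf i).mul (hasDerivAt_pi.1 hg i)

theorem HasDerivAt.matrix_mulVec [CompleteSpace 𝕜] (A : Matrix m n 𝕜) {g : 𝕜 → n → 𝕜}
    {g' : n → 𝕜} {x : 𝕜} (hg : HasDerivAt g g' x) : HasDerivAt (fun s => A *ᵥ g s) (A *ᵥ g') x :=
  (LinearMap.toContinuousLinearMap A.mulVecLin).hasFDerivAt.comp_hasDerivAt x hg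

@[fun_prop]
theorem DifferentiableAt.matrix_mulVec [CompleteSpace 𝕜] (A : Matrix m n 𝕜) {g : E → n → 𝕜}
    {x : E} (hg : DifferentiableAt 𝕜 g x) : DifferentiableAt 𝕜 (fun y => A *ᵥ g y) x :=
  (LinearMap.toContinuousLinearMap A.mulVecLin).differentiableAt.comp x hg

@[fun_prop]
theorem ContDiff.dotProduct {k : WithTop ℕ∞} {f g : E → n → 𝕜} (hf : ContDiff 𝕜 k f)
    (hg : ContDiff 𝕜 k g) : ContDiff 𝕜 k fun x => f x ⬝ᵥ g x :=
  ContDiff.sum fun i _ => (contDiff_pi.1 hf i).mul (contDiff_pi.1 hg i)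

@[fun_prop]
theorem ContDiff.matrix_mulVec [CompleteSpace 𝕜] {k : WithTop ℕ∞} (A : Matrix m n 𝕜)
    {g : E → n → 𝕜} (hg : ContDiff 𝕜 k g) : ContDiff 𝕜 k fun x => A *ᵥ g x :=
  (LinearMap.toContinuousLinearMap A.mulVecLin).contDiff.comp hg

theorem deriv_dotProduct_mulVec [CompleteSpace 𝕜] (A : Matrix m n 𝕜) {f : 𝕜 → m → 𝕜}
    {g : 𝕜 → n → 𝕜} {x : 𝕜} (hf : DifferentiableAt 𝕜 f x) (hg : DifferentiableAt 𝕜 g x) :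
    deriv (fun s => f s ⬝ᵥ A *ᵥ g s) x = deriv f x ⬝ᵥ A *ᵥ g x + f x ⬝ᵥ A *ᵥ deriv g x :=
  (hf.hasDerivAt.dotProduct (hg.hasDerivAt.matrix_mulVec A)).deriv

theorem Matrix.IsSymm.dotProduct_mulVec_comm {R : Type*} [CommSemiring R] {A : Matrix n n R}
    (hA : A.IsSymm) (x y : n → R) : x ⬝ᵥ A *ᵥ y = y ⬝ᵥ A *ᵥ x := by
  conv_lhs => rw [← hA]
  exact dotProduct_transpose_mulVec A x y

theorem HasDerivAt.dotProduct_mulVec_self [CompleteSpace 𝕜] {A : Matrix n n 𝕜} (hA : A.IsSymm)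
    {f : 𝕜 → n → 𝕜} {f' : n → 𝕜} {x : 𝕜} (hf : HasDerivAt f f' x) :
    HasDerivAt (fun s => f s ⬝ᵥ A *ᵥ f s) (2 * (A *ᵥ f x ⬝ᵥ f')) x := by
  convert hf.dotProduct (hf.matrix_mulVec A) using 1
  rw [hA.dotProduct_mulVec_comm (f x) f', dotProduct_comm (A *ᵥ f x), two_mul]

end DotProduct

section PartialDeriv

variable {𝕜 E F : Type*} [NontriviallyNormedField 𝕜] [NormedAddCommGroup E] [NormedSpace 𝕜 E]
  [NormedAddCommGroup F] [NormedSpace 𝕜 F]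

theorem HasFDerivAt.hasDerivAt_prodMk_left {f : 𝕜 × E → F} {f' : 𝕜 × E →L[𝕜] F} {x : 𝕜} {y : E}
    (hf : HasFDerivAt f f' (x, y)) : HasDerivAt (fun s => f (s, y)) (f' (1, 0)) x :=
  hf.comp_hasDerivAt x ((hasDerivAt_id x).prodMk (hasDerivAt_const x y))

theorem HasFDerivAt.hasDerivAt_prodMk_right {f : E × 𝕜 → F} {f' : E × 𝕜 →L[𝕜] F} {x : E} {y : 𝕜}
    (hf : HasFDerivAt f f' (x, y)) : HasDerivAt (fun s => f (x, s)) (f' (0, 1)) y :=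
  hf.comp_hasDerivAt y ((hasDerivAt_const y x).prodMk (hasDerivAt_id y))

theorem ContDiff.continuous_deriv_prodMk_left {f : 𝕜 × E → F} (hf : ContDiff 𝕜 1 f) :
    Continuous fun z : 𝕜 × E => deriv (fun s => f (s, z.2)) z.1 := by
  have hd : Differentiable 𝕜 f := hf.differentiable one_ne_zero
  simp only [fun z : 𝕜 × E => (hd z).hasFDerivAt.hasDerivAt_prodMk_left.deriv]
  exact (hf.continuous_fderiv one_ne_zero).clm_apply continuous_const

end PartialDeriv

theorem integral_divergence_prod_Icc_of_contDiff {E : Type*} [NormedAddCommGroup E]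
    [NormedSpace ℝ E] [CompleteSpace E] {f g : ℝ × ℝ → E} (hf : ContDiff ℝ 1 f)
    (hg : ContDiff ℝ 1 g) {a₁ b₁ a₂ b₂ : ℝ} (h₁ : a₁ ≤ b₁) (h₂ : a₂ ≤ b₂) :
    ∫ ξ in Icc a₁ b₁ ×ˢ Icc a₂ b₂,
        (deriv (fun s => f (s, ξ.2)) ξ.1 + deriv (fun s => g (ξ.1, s)) ξ.2) =
      (∫ y in a₂..b₂, (f (b₁, y) - f (a₁, y))) + ∫ x in a₁..b₁, (g (x, b₂) - g (x, a₂)) := by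
  have hfc := hf.continuous
  have hgc := hg.continuous
  have hdf : Differentiable ℝ f := hf.differentiable one_ne_zero
  have hdg : Differentiable ℝ g := hg.differentiable one_ne_zero
  have hpartial : ∀ ξ : ℝ × ℝ, deriv (fun s => f (s, ξ.2)) ξ.1 + deriv (fun s => g (ξ.1, s)) ξ.2 =
      fderiv ℝ f ξ (1, 0) + fderiv ℝ g ξ (0, 1) := fun ξ => by
    rw [(hdf ξ).hasFDerivAt.hasDerivAt_prodMk_left.deriv,
      (hdg ξ).hasFDerivAt.hasDerivAt_prodMk_right.deriv]
  have hcont : Continuous fun ξ => fderiv ℝ f ξ (1, 0) + fderiv ℝ g ξ (0, 1) :=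
    ((hf.continuous_fderiv one_ne_zero).clm_apply continuous_const).add
      ((hg.continuous_fderiv one_ne_zero).clm_apply continuous_const)
  simp only [hpartial, ← Icc_prod_eq (a₁, a₂) (b₁, b₂)]
  rw [integral_divergence_prod_Icc_of_hasFDerivAt_of_le f g (fderiv ℝ f) (fderiv ℝ g)
    (a₁, a₂) (b₁, b₂) ⟨h₁, h₂⟩ hfc.continuousOn hgc.continuousOn
    (fun ξ _ => (hdf ξ).hasFDerivAt) (fun ξ _ => (hdg ξ).hasFDerivAt)
    hcont.continuousOn.integrableOn_Icc, intervalIntegral.integral_sub,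
    intervalIntegral.integral_sub]
  · abel
  all_goals exact Continuous.intervalIntegrable (by fun_prop) _ _

/-- The `P₀` terms cancel, and the rest is the product rule for `∂ᵢ (e ⬝ᵥ Pᵢ *ᵥ f)`. -/
theorem dotProduct_skew_operator_eq_divergence {R m n : Type*} [CommRing R] [Fintype m]
    [Fintype n] (P₁ P₂ P₀ : Matrix m n R) (e e₁ e₂ : m → R) (f f₁ f₂ : n → R) :
    e ⬝ᵥ (P₁ *ᵥ f₁ + P₂ *ᵥ f₂ + P₀ *ᵥ f) + f ⬝ᵥ (P₁ᵀ *ᵥ e₁ + P₂ᵀ *ᵥ e₂ - P₀ᵀ *ᵥ e) =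
      (e₁ ⬝ᵥ P₁ *ᵥ f + e ⬝ᵥ P₁ *ᵥ f₁) + (e₂ ⬝ᵥ P₂ *ᵥ f + e ⬝ᵥ P₂ *ᵥ f₂) := by
  simp only [dotProduct_add, dotProduct_sub, dotProduct_transpose_mulVec]
  ring

theorem hasDerivAt_setIntegral_hamiltonian {X : Type*} [NormedAddCommGroup X] [NormedSpace ℝ X]
    [MeasurableSpace X] [OpensMeasurableSpace X] {μ : Measure X} [IsFiniteMeasureOnCompacts μ]
    {K : Set X} (hK : IsCompact K) (hKm : MeasurableSet K) {m n : Type*} [Fintype m] [Fintype n]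
    {Qp : Matrix m m ℝ} {Qq : Matrix n n ℝ} (hQp : Qp.IsSymm) (hQq : Qq.IsSymm)
    {p : ℝ × X → m → ℝ} {q : ℝ × X → n → ℝ} (hp : ContDiff ℝ 1 p) (hq : ContDiff ℝ 1 q) (t : ℝ) :
    HasDerivAt (fun t => ∫ ξ in K, (p (t, ξ) ⬝ᵥ Qp *ᵥ p (t, ξ) + q (t, ξ) ⬝ᵥ Qq *ᵥ q (t, ξ)) ∂μ)
      (∫ ξ in K, (2 * (Qp *ᵥ p (t, ξ) ⬝ᵥ deriv (fun s => p (s, ξ)) t)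
        + 2 * (Qq *ᵥ q (t, ξ) ⬝ᵥ deriv (fun s => q (s, ξ)) t)) ∂μ) t := by
  have hpd := hp.differentiable one_ne_zero
  have hqd := hq.differentiable one_ne_zero
  have hpc := hp.continuous
  have hqc := hq.continuous
  have hpdot := hp.continuous_deriv_prodMk_left
  have hqdot := hq.continuous_deriv_prodMk_left
  exact hasDerivAt_setIntegral_of_isCompact hK hKm (fun t => by fun_prop) (by fun_prop)
    (fun t ξ _ => (hasDerivAt_deriv_iff.2 (by fun_prop) |>.dotProduct_mulVec_self hQp).add
      (hasDerivAt_deriv_iff.2 (by fun_prop) |>.dotProduct_mulVec_self hQq)) t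

/-- Energy balance of a linear 2D port-Hamiltonian system on the rectangle
`Ω = [a₁, b₁] × [a₂, b₂]` with quadratic Hamiltonian density: under the dynamics
`∂p/∂t = 𝒫₁ ∂e_q/∂ξ₁ + 𝒫₂ ∂e_q/∂ξ₂ + 𝒫₀ e_q`,
`∂q/∂t = 𝒫₁ᵀ ∂e_p/∂ξ₁ + 𝒫₂ᵀ ∂e_p/∂ξ₂ - 𝒫₀ᵀ e_p` with co-energy variables
`e_p = Q_p p`, `e_q = Q_q q`, the time derivative of the total energy is given
by the four boundary edge integrals. -/
theorem pH_2D_energy_balance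
    (np nq : ℕ) (P1 P2 P0 : Matrix (Fin np) (Fin nq) ℝ)
    (Qp : Matrix (Fin np) (Fin np) ℝ) (hQp : Qp.IsSymm)
    (Qq : Matrix (Fin nq) (Fin nq) ℝ) (hQq : Qq.IsSymm)
    (a₁ b₁ a₂ b₂ : ℝ) (hab₁ : a₁ < b₁) (hab₂ : a₂ < b₂)
    (p : ℝ × ℝ × ℝ → Fin np → ℝ) (q : ℝ × ℝ × ℝ → Fin nq → ℝ)
    (hp : ContDiff ℝ 1 p) (hq : ContDiff ℝ 1 q)
    (ep : ℝ → ℝ → ℝ → Fin np → ℝ) (eq' : ℝ → ℝ → ℝ → Fin nq → ℝ)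
    (hep : ∀ t ξ₁ ξ₂, ep t ξ₁ ξ₂ = Qp.mulVec (p (t, ξ₁, ξ₂)))
    (heq : ∀ t ξ₁ ξ₂, eq' t ξ₁ ξ₂ = Qq.mulVec (q (t, ξ₁, ξ₂)))
    (hpde_p : ∀ t : ℝ, ∀ ξ₁ ∈ Set.Icc a₁ b₁, ∀ ξ₂ ∈ Set.Icc a₂ b₂,
      deriv (fun s => p (s, ξ₁, ξ₂)) t =
        P1.mulVec (deriv (fun ζ => eq' t ζ ξ₂) ξ₁)
          + P2.mulVec (deriv (fun ζ => eq' t ξ₁ ζ) ξ₂)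
          + P0.mulVec (eq' t ξ₁ ξ₂))
    (hpde_q : ∀ t : ℝ, ∀ ξ₁ ∈ Set.Icc a₁ b₁, ∀ ξ₂ ∈ Set.Icc a₂ b₂,
      deriv (fun s => q (s, ξ₁, ξ₂)) t =
        P1ᵀ.mulVec (deriv (fun ζ => ep t ζ ξ₂) ξ₁)
          + P2ᵀ.mulVec (deriv (fun ζ => ep t ξ₁ ζ) ξ₂)
          - P0ᵀ.mulVec (ep t ξ₁ ξ₂))
    (H : ℝ → ℝ)
    (hH : ∀ t, H t = (1 / 2) *
      ∫ ξ in Set.Icc a₁ b₁ ×ˢ Set.Icc a₂ b₂,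
        (p (t, ξ.1, ξ.2) ⬝ᵥ Qp.mulVec (p (t, ξ.1, ξ.2))
          + q (t, ξ.1, ξ.2) ⬝ᵥ Qq.mulVec (q (t, ξ.1, ξ.2)))) :
    ∀ t, HasDerivAt H
      ((∫ ξ₂ in a₂..b₂,
          (ep t b₁ ξ₂ ⬝ᵥ P1.mulVec (eq' t b₁ ξ₂)
            - ep t a₁ ξ₂ ⬝ᵥ P1.mulVec (eq' t a₁ ξ₂)))
        + ∫ ξ₁ in a₁..b₁,
            (ep t ξ₁ b₂ ⬝ᵥ P2.mulVec (eq' t ξ₁ b₂)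
              - ep t ξ₁ a₂ ⬝ᵥ P2.mulVec (eq' t ξ₁ a₂))) t := by
  intro t
  simp only [hep, heq] at hpde_p hpde_q ⊢
  set Ω := Icc a₁ b₁ ×ˢ Icc a₂ b₂
  have hΩm : MeasurableSet Ω := measurableSet_Icc.prod measurableSet_Icc
  have hpd := hp.differentiable one_ne_zero
  have hqd := hq.differentiable one_ne_zero
  let Φ₁ : ℝ × ℝ → ℝ := fun ξ => Qp *ᵥ p (t, ξ) ⬝ᵥ P1 *ᵥ (Qq *ᵥ q (t, ξ))
  let Φ₂ : ℝ × ℝ → ℝ := fun ξ => Qp *ᵥ p (t, ξ) ⬝ᵥ P2 *ᵥ (Qq *ᵥ q (t, ξ))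
  have hdiv : ∀ ξ ∈ Ω, 2 * (Qp *ᵥ p (t, ξ) ⬝ᵥ deriv (fun s => p (s, ξ)) t)
      + 2 * (Qq *ᵥ q (t, ξ) ⬝ᵥ deriv (fun s => q (s, ξ)) t)
      = 2 * (deriv (fun s => Φ₁ (s, ξ.2)) ξ.1 + deriv (fun s => Φ₂ (ξ.1, s)) ξ.2) := by
    rintro ⟨ξ₁, ξ₂⟩ ⟨h₁, h₂⟩
    rw [hpde_p t ξ₁ h₁ ξ₂ h₂, hpde_q t ξ₁ h₁ ξ₂ h₂,
      deriv_dotProduct_mulVec P1 (by fun_prop) (by fun_prop),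
      deriv_dotProduct_mulVec P2 (by fun_prop) (by fun_prop),
      ← dotProduct_skew_operator_eq_divergence]
    ring
  rw [show H = _ from funext hH]
  refine ((hasDerivAt_setIntegral_hamiltonian (isCompact_Icc.prod isCompact_Icc) hΩm hQp hQq hp hq
    t).const_mul (1 / 2)).congr_deriv ?_
  rw [setIntegral_congr_fun hΩm hdiv, integral_const_mul,
    integral_divergence_prod_Icc_of_contDiff (by fun_prop) (by fun_prop) hab₁.le hab₂.le]
  ring
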